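/- Let V and G be finite nonempty sets and let p̂ be a probability mass function on V × G with p̂(ν, g) > 0 for all ν, g; write p̂(ν), p̂(g) for the marginals and define PMI(ν, g) = log( p̂(ν, g) / ( p̂(ν) · p̂(g) ) ). Suppose m : V → ℝ and η : V → G → ℝ satisfy, for all ν and g, p̂(ν, g) / p̂(g) = exp(m ν + η ν g) / Z g, where Z g = Σ_{ν' ∈ V} exp(m ν' + η ν' g), and suppose m ν = log p̂(ν) for all ν. Then for each fixed g ∈ G the function ν ↦ exp(η ν g) is proportional over ν ∈ V to the function ν ↦ exp(PMI(ν, g)); explicitly, there exists a constant c_g > 0 (namely c_g = Z g) such that exp(PMI(ν, g)) = exp(η ν g) / c_g for all ν ∈ V. Hence ranking neighbors ν by the gender-deviation score τ_g(ν) ∝ exp(η ν g) is equivalent to ranking them by exp(PMI(ν, g)). -/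

import Mathlib

/-! With `m ν = log p̂(ν)` the fitted conditional is `p̂(ν | g) = p̂(ν) · exp(η ν g) / Z g`;
dividing by `p̂(ν)` turns the left side into `exp(PMI(ν, g))`, so `Z g`, which does not depend on
`ν`, is the proportionality constant. -/

open Real Finset

lemma div_mul_eq_of_div_eq_exp_log_add {a b c e Z : ℝ} (hc : 0 < c)
    (h : a / b = exp (log c + e) / Z) : a / (c * b) = exp e / Z := by
  rw [mul_comm, ← div_div, h, exp_add, exp_log hc]
  field_simp

theorem exp_pmi_propto_exp_eta_general
    {V G : Type*} [Fintype V] [Fintype G] [Nonempty V] [Nonempty G]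
    (phat : V → G → ℝ)
    (hpos : ∀ ν g, 0 < phat ν g)
    (m : V → ℝ) (η : V → G → ℝ) (Z : G → ℝ)
    (hZ : ∀ g, Z g = ∑ ν', Real.exp (m ν' + η ν' g))
    (hfit : ∀ ν g, phat ν g / (∑ ν', phat ν' g) = Real.exp (m ν + η ν g) / Z g)
    (hm : ∀ ν, m ν = Real.log (∑ g', phat ν g')) :
    ∀ g, ∃ c : ℝ, 0 < c ∧ c = Z g ∧ ∀ ν,
      Real.exp (Real.log (phat ν g / ((∑ g', phat ν g') * (∑ ν', phat ν' g)))) =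
        Real.exp (η ν g) / c := by
  intro g
  have hZ_pos : 0 < Z g := hZ g ▸ sum_pos (fun ν _ => exp_pos _) univ_nonempty
  refine ⟨Z g, hZ_pos, rfl, fun ν => ?_⟩
  have hν_pos : 0 < ∑ g', phat ν g' := sum_pos (fun g' _ => hpos ν g') univ_nonempty
  have hg_pos : 0 < ∑ ν', phat ν' g := sum_pos (fun ν' _ => hpos ν' g) univ_nonempty
  rw [exp_log (div_pos (hpos ν g) (mul_pos hν_pos hg_pos))]
  exact div_mul_eq_of_div_eq_exp_log_add hν_pos (hm ν ▸ hfit ν g)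

/-- Proposition 1: Under the same hypotheses as Statement 1, for
each fixed gender `g` the function `ν ↦ exp(η ν g)` is proportional to
`ν ↦ exp(PMI(ν, g))`: there is a constant `c > 0` (namely `c = Z g`) such
that `exp(PMI(ν, g)) = exp(η ν g) / c` for all `ν`. -/
theorem exp_pmi_propto_exp_eta
    {V G : Type*} [Fintype V] [Fintype G] [Nonempty V] [Nonempty G]
    (phat : V → G → ℝ)
    (hpos : ∀ ν g, 0 < phat ν g)
    (hsum : ∑ ν, ∑ g, phat ν g = 1)
    (m : V → ℝ) (η : V → G → ℝ) (Z : G → ℝ)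
    (hZ : ∀ g, Z g = ∑ ν', Real.exp (m ν' + η ν' g))
    (hfit : ∀ ν g, phat ν g / (∑ ν', phat ν' g) = Real.exp (m ν + η ν g) / Z g)
    (hm : ∀ ν, m ν = Real.log (∑ g', phat ν g')) :
    ∀ g, ∃ c : ℝ, 0 < c ∧ c = Z g ∧ ∀ ν,
      Real.exp (Real.log (phat ν g / ((∑ g', phat ν g') * (∑ ν', phat ν' g)))) =
        Real.exp (η ν g) / c :=
  exp_pmi_propto_exp_eta_general phat hpos m η Z hZ hfit hm
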